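/- Let H̄ be a digraph Brown functor and Ĥ its extension to all digraphs defined by Ĥ(G) = inverse limit of H̄(G_α) over all finite subdigraphs G_α of G. Then Ĥ satisfies the additivity axiom: for any family {G_λ} of digraphs, the canonical map Ĥ(⊔_λ G_λ) → ∏_λ Ĥ(G_λ) is an isomorphism. -/

import Mathlib

/-- A directed graph: a vertex type with a loopless edge relation. -/
structure DGraph where
  V : Type
  E : V → V → Prop
  loopless : ∀ v, ¬ E v v

/-- A digraph map: each edge is collapsed or preserved. -/
structure DMap (G H : DGraph) where
  toFun : G.V → H.V
  map_edge : ∀ {x y}, G.E x y → toFun x = toFun y ∨ H.E (toFun x) (toFun y)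

def DMap.id (G : DGraph) : DMap G G := ⟨fun x => x, fun e => Or.inr e⟩

def DMap.comp {G H K : DGraph} (g : DMap H K) (f : DMap G H) : DMap G K :=
  ⟨fun x => g.toFun (f.toFun x), fun e => by
    rcases f.map_edge e with h | h
    · exact Or.inl (congrArg g.toFun h)
    · exact g.map_edge h⟩

/-- The `n`-step line digraph with orientations given by `o`:
if `o i` then the edge between `i` and `i+1` goes `i → i+1`, else `i+1 → i`. -/
def lineD (n : ℕ) (o : ℕ → Bool) : DGraph where
  V := Fin (n+1)
  E i j := ((j:ℕ) = (i:ℕ)+1 ∧ o (i:ℕ) = true) ∨ ((i:ℕ) = (j:ℕ)+1 ∧ o (j:ℕ) = false)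
  loopless := by rintro v (⟨h,_⟩|⟨h,_⟩) <;> omega

/-- The box product of digraphs. -/
def boxProd (G H : DGraph) : DGraph where
  V := G.V × H.V
  E p q := (p.1 = q.1 ∧ H.E p.2 q.2) ∨ (G.E p.1 q.1 ∧ p.2 = q.2)
  loopless := by
    rintro ⟨a,b⟩ (⟨_,h⟩|⟨h,_⟩)
    · exact H.loopless _ h
    · exact G.loopless _ h

/-- Homotopy of digraph maps via a line-digraph parametrized family. -/
def Homotopic {G H : DGraph} (f g : DMap G H) : Prop :=
  ∃ (n : ℕ) (o : ℕ → Bool) (F : DMap (boxProd G (lineD n o)) H),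
    (∀ x, F.toFun (x, (0 : Fin (n+1))) = f.toFun x) ∧
    (∀ x, F.toFun (x, Fin.last n) = g.toFun x)

def DMap.const (G H : DGraph) (c : H.V) : DMap G H := ⟨fun _ => c, fun _ => Or.inl rfl⟩

/-- A digraph is contractible if its identity is homotopic to a constant map. -/
def Contractible (G : DGraph) : Prop :=
  ∃ c : G.V, Homotopic (DMap.id G) (DMap.const G G c)

/-- Homotopy equivalence of digraphs. -/
def HomotopyEquivalence {G H : DGraph} (u : DMap G H) (v : DMap H G) : Prop :=
  Homotopic (v.comp u) (DMap.id G) ∧ Homotopic (u.comp v) (DMap.id H)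

open CategoryTheory

/-- A subdigraph of a digraph, given by subsets of vertices and edges. -/
structure Subdigraph (Y : DGraph) where
  verts : Set Y.V
  edges : Y.V → Y.V → Prop
  edge_sub : ∀ {x y}, edges x y → Y.E x y
  edge_mem : ∀ {x y}, edges x y → x ∈ verts ∧ y ∈ verts

namespace Subdigraph
variable {Y : DGraph}

def le (A B : Subdigraph Y) : Prop :=
  A.verts ⊆ B.verts ∧ ∀ {x y}, A.edges x y → B.edges x y

def union (A B : Subdigraph Y) : Subdigraph Y where
  verts := A.verts ∪ B.verts
  edges x y := A.edges x y ∨ B.edges x y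
  edge_sub := by rintro x y (h|h) <;> [exact A.edge_sub h; exact B.edge_sub h]
  edge_mem := by
    rintro x y (h|h)
    · exact ⟨Or.inl (A.edge_mem h).1, Or.inl (A.edge_mem h).2⟩
    · exact ⟨Or.inr (B.edge_mem h).1, Or.inr (B.edge_mem h).2⟩

def inter (A B : Subdigraph Y) : Subdigraph Y where
  verts := A.verts ∩ B.verts
  edges x y := A.edges x y ∧ B.edges x y
  edge_sub h := A.edge_sub h.1
  edge_mem h := ⟨⟨(A.edge_mem h.1).1, (B.edge_mem h.2).1⟩, (A.edge_mem h.1).2, (B.edge_mem h.2).2⟩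

/-- The digraph determined by a subdigraph. -/
def toD (A : Subdigraph Y) : DGraph where
  V := {v // v ∈ A.verts}
  E x y := A.edges x.val y.val
  loopless v h := Y.loopless v.val (A.edge_sub h)

def inclDMap {A B : Subdigraph Y} (h : A.le B) : DMap A.toD B.toD :=
  ⟨fun v => ⟨v.val, h.1 v.prop⟩, fun e => Or.inr (h.2 e)⟩

/-- Inclusion of a subdigraph into the ambient digraph. -/
def inclY (A : Subdigraph Y) : DMap A.toD Y :=
  ⟨fun v => v.val, fun e => Or.inr (A.edge_sub e)⟩

theorem le_union_left (A B : Subdigraph Y) : A.le (A.union B) :=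
  ⟨fun _ h => Or.inl h, fun e => Or.inl e⟩
theorem le_union_right (A B : Subdigraph Y) : B.le (A.union B) :=
  ⟨fun _ h => Or.inr h, fun e => Or.inr e⟩
theorem inter_le_left (A B : Subdigraph Y) : (A.inter B).le A :=
  ⟨fun _ h => h.1, fun e => e.1⟩
theorem inter_le_right (A B : Subdigraph Y) : (A.inter B).le B :=
  ⟨fun _ h => h.2, fun e => e.2⟩

theorem finiteV {A : Subdigraph Y} (h : A.verts.Finite) : Finite A.toD.V :=
  h.to_subtype

theorem inter_verts_finite {A B : Subdigraph Y} (hA : A.verts.Finite) :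
    (A.inter B).verts.Finite := hA.subset Set.inter_subset_left

theorem union_verts_finite {A B : Subdigraph Y} (hA : A.verts.Finite)
    (hB : B.verts.Finite) : (A.union B).verts.Finite := hA.union hB
end Subdigraph

/-- Disjoint union (coproduct) of a family of digraphs. -/
def sigmaD {ι : Type} (G : ι → DGraph) : DGraph where
  V := Σ i, (G i).V
  E a b := ∃ h : a.1 = b.1, (G b.1).E (cast (congrArg (fun i => (G i).V) h) a.2) b.2
  loopless := by rintro ⟨i, x⟩ ⟨h, e⟩; exact (G i).loopless x e

def sigmaIncl {ι : Type} (G : ι → DGraph) (i : ι) : DMap (G i) (sigmaD G) :=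
  ⟨fun x => ⟨i, x⟩, fun e => Or.inr ⟨rfl, e⟩⟩

/-- Binary disjoint union of digraphs. -/
def sumD (G H : DGraph) : DGraph where
  V := Sum G.V H.V
  E a b :=
    match a, b with
    | Sum.inl x, Sum.inl y => G.E x y
    | Sum.inr x, Sum.inr y => H.E x y
    | _, _ => False
  loopless := by
    rintro (x|x) h
    · exact G.loopless x h
    · exact H.loopless x h

/-- A digraph Brown functor: a contravariant, homotopy-invariant, abelian-group valued
functor on finite digraphs satisfying the triviality, additivity and Mayer–Vietoris axioms. -/
structure BrownFunctor where
  obj : ∀ (G : DGraph), Finite G.V → AddCommGrpCat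
  map : ∀ {G H : DGraph} (hG : Finite G.V) (hH : Finite H.V),
    DMap G H → (obj H hH ⟶ obj G hG)
  map_id : ∀ (G : DGraph) (hG : Finite G.V), map hG hG (DMap.id G) = 𝟙 (obj G hG)
  map_comp : ∀ {G H K : DGraph} (hG : Finite G.V) (hH : Finite H.V) (hK : Finite K.V)
    (f : DMap G H) (g : DMap H K), map hG hK (g.comp f) = (map hH hK g) ≫ (map hG hH f)
  map_homotopic : ∀ {G H : DGraph} (hG : Finite G.V) (hH : Finite H.V)
    (f g : DMap G H), Homotopic f g → map hG hH f = map hG hH g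
  triviality : ∀ (G : DGraph) (hG : Finite G.V), Subsingleton G.V → Nonempty G.V →
    ∀ x : obj G hG, x = 0
  additivity : ∀ {ι : Type} [Finite ι] (Gf : ι → DGraph) (h : ∀ i, Finite (Gf i).V),
    Function.Bijective (fun (x : obj (sigmaD Gf) (by have := h; exact Finite.instSigma)) i =>
      map (h i) _ (sigmaIncl Gf i) x)
  mayer_vietoris : ∀ (Y : DGraph) (A B : Subdigraph Y)
    (hA : A.verts.Finite) (hB : B.verts.Finite)
    (a : obj A.toD (Subdigraph.finiteV hA)) (b : obj B.toD (Subdigraph.finiteV hB)),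
    map (Subdigraph.finiteV (Subdigraph.inter_verts_finite hA)) _
        (Subdigraph.inclDMap (Subdigraph.inter_le_left A B)) a =
    map (Subdigraph.finiteV (Subdigraph.inter_verts_finite hA)) _
        (Subdigraph.inclDMap (Subdigraph.inter_le_right A B)) b →
    ∃ c : obj (A.union B).toD (Subdigraph.finiteV (Subdigraph.union_verts_finite hA hB)),
      map _ _ (Subdigraph.inclDMap (Subdigraph.le_union_left A B)) c = a ∧
      map _ _ (Subdigraph.inclDMap (Subdigraph.le_union_right A B)) c = b

theorem DMap.ext {G H : DGraph} {u v : DMap G H} (h : u.toFun = v.toFun) : u = v := by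
  cases u; cases v; cases h; rfl

/-- The directed set of finite subdigraphs of a digraph. -/
def FinSub (G : DGraph) := {A : Subdigraph G // A.verts.Finite}

/-- The extension `Ĥ` of a Brown functor to arbitrary digraphs: the inverse limit over
all finite subdigraphs, realized as compatible families. -/
def hatObj (B : BrownFunctor) (G : DGraph) : Type :=
  {x : ∀ A : FinSub G, B.obj A.val.toD (Subdigraph.finiteV A.prop) //
    ∀ (A A' : FinSub G) (h : A.val.le A'.val),
      B.map _ _ (Subdigraph.inclDMap h) (x A') = x A}

/-- The image of a subdigraph under a digraph map. -/
def imageSub {G H : DGraph} (f : DMap G H) (A : Subdigraph G) : Subdigraph H where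
  verts := f.toFun '' A.verts
  edges h h' := h ≠ h' ∧ ∃ x y, A.edges x y ∧ f.toFun x = h ∧ f.toFun y = h'
  edge_sub := by
    rintro u v ⟨hne, x, y, e, rfl, rfl⟩
    rcases f.map_edge (A.edge_sub e) with h | h
    · exact absurd h hne
    · exact h
  edge_mem := by
    rintro u v ⟨hne, x, y, e, rfl, rfl⟩
    exact ⟨⟨x, (A.edge_mem e).1, rfl⟩, ⟨y, (A.edge_mem e).2, rfl⟩⟩

/-- Restriction of a digraph map to a subdigraph, with values in the image subdigraph. -/
def restrictMap {G H : DGraph} (f : DMap G H) (A : Subdigraph G) :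
    DMap A.toD (imageSub f A).toD where
  toFun v := ⟨f.toFun v.val, v.val, v.prop, rfl⟩
  map_edge := by
    rintro ⟨x, hx⟩ ⟨y, hy⟩ e
    by_cases h : f.toFun x = f.toFun y
    · exact Or.inl (Subtype.ext h)
    · exact Or.inr ⟨h, x, y, e, rfl, rfl⟩

def imageFin {G H : DGraph} (f : DMap G H) (A : FinSub G) : FinSub H :=
  ⟨imageSub f A.val, A.prop.image _⟩

theorem imageFin_mono {G H : DGraph} (f : DMap G H) {A A' : FinSub G}
    (h : A.val.le A'.val) : (imageFin f A).val.le (imageFin f A').val := by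
  constructor
  · exact Set.image_mono h.1
  · rintro x y ⟨hne, a, b, e, rfl, rfl⟩
    exact ⟨hne, a, b, h.2 e, rfl, rfl⟩

/-- The functorial action of the extension `Ĥ` on digraph maps. -/
def hatMap (B : BrownFunctor) {G H : DGraph} (f : DMap G H) :
    hatObj B H → hatObj B G := fun y =>
  ⟨fun A => B.map _ _ (restrictMap f A.val) (y.val (imageFin f A)), by
    intro A A' h
    have hcomm : (DMap.comp (restrictMap f A'.val) (Subdigraph.inclDMap h)) =
        (DMap.comp (Subdigraph.inclDMap (imageFin_mono f h)) (restrictMap f A.val)) := by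
      apply DMap.ext; funext v; rfl
    have h3 := y.prop (imageFin f A) (imageFin f A') (imageFin_mono f h)
    have h1 := congrArg (fun φ => φ (y.val (imageFin f A')))
      (B.map_comp (Subdigraph.finiteV A.prop) (Subdigraph.finiteV A'.prop)
        (Subdigraph.finiteV (imageFin f A').prop)
        (Subdigraph.inclDMap h) (restrictMap f A'.val))
    have h2 := congrArg (fun φ => φ (y.val (imageFin f A')))
      (B.map_comp (Subdigraph.finiteV A.prop) (Subdigraph.finiteV (imageFin f A).prop)
        (Subdigraph.finiteV (imageFin f A').prop)
        (restrictMap f A.val) (Subdigraph.inclDMap (imageFin_mono f h)))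
    beta_reduce
    rw [← h3]
    exact (h1.symm.trans (congrArg (fun m => B.map (Subdigraph.finiteV A.prop)
      (Subdigraph.finiteV (imageFin f A').prop) m (y.val (imageFin f A'))) hcomm)).trans h2⟩

theorem hom_congr_apply {X Y : AddCommGrpCat} {f g : X ⟶ Y} (h : f = g) (x : X) : f x = g x := by
  rw [h]

section Aux

variable {ι : Type}

/-- `B.map` of a digraph isomorphism is bijective. -/
theorem BrownFunctor.map_bij (B : BrownFunctor) {G H : DGraph} (hG : Finite G.V)
    (hH : Finite H.V) (u : DMap G H) (v : DMap H G)
    (h1 : DMap.comp v u = DMap.id G) (h2 : DMap.comp u v = DMap.id H) :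
    Function.Bijective (B.map hG hH u) := by
  have e1 : ∀ x, (B.map hG hH u) ((B.map hH hG v) x) = x := by
    intro x
    have h := B.map_comp hG hH hG u v
    rw [h1, B.map_id] at h
    have := congrArg (fun f => f x) h.symm
    simpa using this
  have e2 : ∀ x, (B.map hH hG v) ((B.map hG hH u) x) = x := by
    intro x
    have h := B.map_comp hH hG hH v u
    rw [h2, B.map_id] at h
    have := congrArg (fun f => f x) h.symm
    simpa using this
  exact Function.bijective_iff_has_inverse.mpr ⟨B.map hH hG v, e2, e1⟩

/-- The part of a subdigraph of a disjoint union lying in component `i`. -/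
def compSub (Gf : ι → DGraph) (A : Subdigraph (sigmaD Gf)) (i : ι) : Subdigraph (Gf i) where
  verts := {v | (⟨i, v⟩ : Σ j, (Gf j).V) ∈ A.verts}
  edges x y := A.edges ⟨i, x⟩ ⟨i, y⟩
  edge_sub := by
    intro x y h
    obtain ⟨h', e⟩ := A.edge_sub h
    exact e
  edge_mem h := A.edge_mem h

theorem compSub_finite {Gf : ι → DGraph} {A : Subdigraph (sigmaD Gf)}
    (hA : A.verts.Finite) (i : ι) : (compSub Gf A i).verts.Finite :=
  Set.Finite.preimage (Function.Injective.injOn sigma_mk_injective) hA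

/-- `compFin Gf A i` : the component of a finite subdigraph, as a finite subdigraph. -/
def compFin (Gf : ι → DGraph) (A : FinSub (sigmaD Gf)) (i : ι) : FinSub (Gf i) :=
  ⟨compSub Gf A.val i, compSub_finite A.prop i⟩

/-- The inclusion of a component of a subdigraph of a disjoint union. -/
def riMap (Gf : ι → DGraph) (A : Subdigraph (sigmaD Gf)) (i : ι) :
    DMap (compSub Gf A i).toD A.toD :=
  ⟨fun w => ⟨⟨i, w.val⟩, w.prop⟩, fun e => Or.inr e⟩

/-- The (finite) set of indices where a finite subdigraph of a disjoint union lives. -/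
def SIdx (Gf : ι → DGraph) (A : Subdigraph (sigmaD Gf)) : Type :=
  {i : ι // ((compSub Gf A i).verts).Nonempty}

theorem SIdx_finite {Gf : ι → DGraph} {A : Subdigraph (sigmaD Gf)}
    (hA : A.verts.Finite) : Finite (SIdx Gf A) := by
  haveI : Finite A.verts := hA.to_subtype
  refine Finite.of_injective
    (fun i : SIdx Gf A => (⟨⟨i.val, i.prop.choose⟩, i.prop.choose_spec⟩ : A.verts)) ?_
  intro i j h
  apply Subtype.ext
  exact congrArg Sigma.fst (congrArg Subtype.val h)

/-- The family of components of a subdigraph of a disjoint union. -/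
def FF (Gf : ι → DGraph) (A : Subdigraph (sigmaD Gf)) : SIdx Gf A → DGraph :=
  fun i => (compSub Gf A i.val).toD

def toSig (Gf : ι → DGraph) (A : Subdigraph (sigmaD Gf)) :
    DMap A.toD (sigmaD (FF Gf A)) where
  toFun v := ⟨⟨v.val.1, ⟨v.val.2, v.prop⟩⟩, ⟨v.val.2, v.prop⟩⟩
  map_edge := by
    rintro ⟨⟨i, a⟩, ha⟩ ⟨⟨j, b⟩, hb⟩ e
    obtain ⟨h, _⟩ := A.edge_sub e
    dsimp at h
    subst h
    exact Or.inr ⟨rfl, e⟩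

def fromSig (Gf : ι → DGraph) (A : Subdigraph (sigmaD Gf)) :
    DMap (sigmaD (FF Gf A)) A.toD where
  toFun p := ⟨⟨p.1.val, p.2.val⟩, p.2.prop⟩
  map_edge := by
    rintro ⟨⟨i, hi⟩, a⟩ ⟨⟨j, hj⟩, b⟩ ⟨h, e⟩
    have hij : i = j := congrArg Subtype.val h
    subst hij
    exact Or.inr e

theorem fromSig_toSig (Gf : ι → DGraph) (A : Subdigraph (sigmaD Gf)) :
    DMap.comp (fromSig Gf A) (toSig Gf A) = DMap.id A.toD :=
  DMap.ext rfl

theorem toSig_fromSig (Gf : ι → DGraph) (A : Subdigraph (sigmaD Gf)) :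
    DMap.comp (toSig Gf A) (fromSig Gf A) = DMap.id (sigmaD (FF Gf A)) :=
  DMap.ext rfl

/-- **Key bijection**: an element of `B.obj A.toD` is determined by (and can be built from)
its restrictions to the components of `A`. -/
theorem keyBij (B : BrownFunctor) (Gf : ι → DGraph) (A : FinSub (sigmaD Gf)) :
    Function.Bijective
      (fun (x : B.obj A.val.toD (Subdigraph.finiteV A.prop)) (i : SIdx Gf A.val) =>
        B.map (Subdigraph.finiteV (compSub_finite A.prop i.val))
          (Subdigraph.finiteV A.prop) (riMap Gf A.val i.val) x) := by
  haveI : Finite (SIdx Gf A.val) := SIdx_finite A.prop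
  haveI hfib : ∀ i : SIdx Gf A.val, Finite (FF Gf A.val i).V :=
    fun i => Subdigraph.finiteV (compSub_finite A.prop i.val)
  haveI hsig : Finite (sigmaD (FF Gf A.val)).V := Finite.instSigma
  have hiso := B.map_bij hsig (Subdigraph.finiteV A.prop) (fromSig Gf A.val)
    (toSig Gf A.val) (toSig_fromSig Gf A.val) (fromSig_toSig Gf A.val)
  have hadd := B.additivity (FF Gf A.val) hfib
  have hcomp :
      (fun (x : B.obj A.val.toD (Subdigraph.finiteV A.prop)) (i : SIdx Gf A.val) =>
        B.map (Subdigraph.finiteV (compSub_finite A.prop i.val))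
          (Subdigraph.finiteV A.prop) (riMap Gf A.val i.val) x) =
      (fun (z : B.obj (sigmaD (FF Gf A.val)) _) (i : SIdx Gf A.val) =>
          B.map (hfib i) _ (sigmaIncl (FF Gf A.val) i) z) ∘
        (B.map hsig (Subdigraph.finiteV A.prop) (fromSig Gf A.val)) := by
    funext x
    funext i
    have hr : riMap Gf A.val i.val =
        DMap.comp (fromSig Gf A.val) (sigmaIncl (FF Gf A.val) i) := DMap.ext rfl
    have := hom_congr_apply
      (B.map_comp (hfib i) hsig (Subdigraph.finiteV A.prop)
        (sigmaIncl (FF Gf A.val) i) (fromSig Gf A.val)) x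
    simp only [Function.comp_apply]
    rw [hr]
    exact this
  rw [hcomp]
  exact Function.Bijective.comp hadd hiso

/-- `B.obj` of an empty digraph is trivial (via additivity over the empty family). -/
theorem obj_empty_eq (B : BrownFunctor) (G : DGraph) (hG : Finite G.V)
    (h : IsEmpty G.V) (a b : B.obj G hG) : a = b := by
  let Gf0 : Empty → DGraph := fun e => e.elim
  haveI hfib : ∀ i : Empty, Finite (Gf0 i).V := fun i => i.elim
  haveI : IsEmpty (sigmaD Gf0).V := ⟨fun p => p.1.elim⟩
  haveI hsig : Finite (sigmaD Gf0).V := Finite.of_subsingleton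
  let u : DMap G (sigmaD Gf0) := ⟨fun v => (h.false v).elim, fun {x y} _ => (h.false x).elim⟩
  let v : DMap (sigmaD Gf0) G := ⟨fun p => p.1.elim, fun {x y} _ => x.1.elim⟩
  have h1 : DMap.comp v u = DMap.id G := DMap.ext (funext fun w => (h.false w).elim)
  have h2 : DMap.comp u v = DMap.id (sigmaD Gf0) := DMap.ext (funext fun p => p.1.elim)
  have hbij := B.map_bij hG hsig u v h1 h2
  have hadd := B.additivity Gf0 hfib
  obtain ⟨a', ha'⟩ := hbij.surjective a
  obtain ⟨b', hb'⟩ := hbij.surjective b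
  have : a' = b' := hadd.injective (funext fun e => e.elim)
  rw [← ha', ← hb', this]

/-- The image of the `i`-th component of `A` under `sigmaIncl` is contained in `A`. -/
theorem imageFin_comp_le (Gf : ι → DGraph) (A : FinSub (sigmaD Gf)) (i : ι) :
    (imageFin (sigmaIncl Gf i) (compFin Gf A i)).val.le A.val := by
  constructor
  · rintro v ⟨w, hw, rfl⟩
    exact hw
  · rintro x y ⟨hne, a, b, e, rfl, rfl⟩
    exact e

/-- Bridge: the restriction of `x A` to the `i`-th component of `A` is computed by
`hatMap` along `sigmaIncl`. -/
theorem bridge (B : BrownFunctor) (Gf : ι → DGraph) (A : FinSub (sigmaD Gf)) (i : ι)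
    (x : hatObj B (sigmaD Gf)) :
    B.map (Subdigraph.finiteV (compSub_finite A.prop i)) (Subdigraph.finiteV A.prop)
        (riMap Gf A.val i) (x.val A) =
      (hatMap B (sigmaIncl Gf i) x).val (compFin Gf A i) := by
  have hle := imageFin_comp_le Gf A i
  have hx := x.prop (imageFin (sigmaIncl Gf i) (compFin Gf A i)) A hle
  have hr : riMap Gf A.val i =
      DMap.comp (Subdigraph.inclDMap hle)
        (restrictMap (sigmaIncl Gf i) (compFin Gf A i).val) := DMap.ext rfl
  have hc := hom_congr_apply
    (B.map_comp (Subdigraph.finiteV (compSub_finite A.prop i))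
      (Subdigraph.finiteV (imageFin (sigmaIncl Gf i) (compFin Gf A i)).prop)
      (Subdigraph.finiteV A.prop)
      (restrictMap (sigmaIncl Gf i) (compFin Gf A i).val)
      (Subdigraph.inclDMap hle)) (x.val A)
  rw [hr]
  refine hc.trans ?_
  show B.map _ _ (restrictMap (sigmaIncl Gf i) (compFin Gf A i).val)
    (B.map _ _ (Subdigraph.inclDMap hle) (x.val A)) = _
  rw [hx]
  rfl

/-- Components are monotone in the subdigraph. -/
theorem compSub_mono (Gf : ι → DGraph) {A A' : Subdigraph (sigmaD Gf)} (h : A.le A') (i : ι) :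
    (compSub Gf A i).le (compSub Gf A' i) :=
  ⟨fun _ hv => h.1 hv, fun e => h.2 e⟩

end Aux

/-- The extension `Ĥ` of a digraph Brown functor `H̄` to all digraphs by
inverse limits over finite subdigraphs satisfies the additivity axiom: for any family
`{G_λ}` of digraphs, the canonical map `Ĥ(⊔_λ G_λ) → ∏_λ Ĥ(G_λ)` is an isomorphism. -/
theorem hat_additivity (B : BrownFunctor) {ι : Type} (Gf : ι → DGraph) :
    Function.Bijective
      (fun (x : hatObj B (sigmaD Gf)) (i : ι) => hatMap B (sigmaIncl Gf i) x) := by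
  constructor
  · -- Injectivity
    intro x x' h
    apply Subtype.ext
    funext A
    apply (keyBij B Gf A).injective
    funext i
    show B.map (Subdigraph.finiteV (compSub_finite A.prop i.val)) (Subdigraph.finiteV A.prop)
        (riMap Gf A.val i.val) (x.val A) =
      B.map (Subdigraph.finiteV (compSub_finite A.prop i.val)) (Subdigraph.finiteV A.prop)
        (riMap Gf A.val i.val) (x'.val A)
    exact (bridge B Gf A i.val x).trans
      (((congrArg (fun t => t.val (compFin Gf A i.val)) (congrFun h i.val))).trans
        (bridge B Gf A i.val x').symm)
  · -- Surjectivity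
    intro y
    have exu : ∀ A : FinSub (sigmaD Gf),
        ∃! z : B.obj A.val.toD (Subdigraph.finiteV A.prop),
          (fun i : SIdx Gf A.val =>
            B.map (Subdigraph.finiteV (compSub_finite A.prop i.val))
              (Subdigraph.finiteV A.prop) (riMap Gf A.val i.val) z) =
          (fun i : SIdx Gf A.val => (y i.val).val (compFin Gf A i.val)) :=
      fun A => (keyBij B Gf A).existsUnique _
    choose xf hxf using fun A => (exu A).exists
    -- compatibility of the glued family
    have hcompat : ∀ (A A' : FinSub (sigmaD Gf)) (hle : A.val.le A'.val),
        B.map (Subdigraph.finiteV A.prop) (Subdigraph.finiteV A'.prop)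
          (Subdigraph.inclDMap hle) (xf A') = xf A := by
      intro A A' hle
      apply (keyBij B Gf A).injective
      refine Eq.trans ?_ (hxf A).symm
      funext i
      have hne' : ((compSub Gf A'.val i.val).verts).Nonempty :=
        ⟨i.prop.choose, hle.1 i.prop.choose_spec⟩
      have hci : (compSub Gf A.val i.val).le (compSub Gf A'.val i.val) :=
        compSub_mono Gf hle i.val
      have hd : DMap.comp (Subdigraph.inclDMap hle) (riMap Gf A.val i.val) =
          DMap.comp (riMap Gf A'.val i.val) (Subdigraph.inclDMap hci) := DMap.ext rfl
      have e1 := hom_congr_apply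
        (B.map_comp (Subdigraph.finiteV (compSub_finite A.prop i.val))
          (Subdigraph.finiteV A.prop) (Subdigraph.finiteV A'.prop)
          (riMap Gf A.val i.val) (Subdigraph.inclDMap hle)) (xf A')
      have e2 := hom_congr_apply
        (B.map_comp (Subdigraph.finiteV (compSub_finite A.prop i.val))
          (Subdigraph.finiteV (compSub_finite A'.prop i.val))
          (Subdigraph.finiteV A'.prop)
          (Subdigraph.inclDMap hci) (riMap Gf A'.val i.val)) (xf A')
      have hy' := congrFun (hxf A') (⟨i.val, hne'⟩ : SIdx Gf A'.val)
      show B.map (Subdigraph.finiteV (compSub_finite A.prop i.val)) (Subdigraph.finiteV A.prop)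
          (riMap Gf A.val i.val)
          (B.map (Subdigraph.finiteV A.prop) (Subdigraph.finiteV A'.prop)
            (Subdigraph.inclDMap hle) (xf A')) = (y i.val).val (compFin Gf A i.val)
      refine (e1.symm.trans (by rw [hd])).trans (e2.trans ?_)
      show B.map (Subdigraph.finiteV (compSub_finite A.prop i.val))
          (Subdigraph.finiteV (compSub_finite A'.prop i.val)) (Subdigraph.inclDMap hci)
          (B.map (Subdigraph.finiteV (compSub_finite A'.prop i.val))
            (Subdigraph.finiteV A'.prop) (riMap Gf A'.val i.val) (xf A')) = _
      rw [show B.map (Subdigraph.finiteV (compSub_finite A'.prop i.val))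
            (Subdigraph.finiteV A'.prop) (riMap Gf A'.val i.val) (xf A') =
          (y i.val).val (compFin Gf A' i.val) from hy']
      exact (y i.val).prop (compFin Gf A i.val) (compFin Gf A' i.val) hci
    refine ⟨⟨xf, hcompat⟩, ?_⟩
    funext i
    apply Subtype.ext
    funext C
    show B.map (Subdigraph.finiteV C.prop)
        (Subdigraph.finiteV (imageFin (sigmaIncl Gf i) C).prop)
        (restrictMap (sigmaIncl Gf i) C.val) (xf (imageFin (sigmaIncl Gf i) C)) =
      (y i).val C
    set D := imageFin (sigmaIncl Gf i) C with hD
    rcases C.val.verts.eq_empty_or_nonempty with hC | ⟨w0, hw0⟩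
    · haveI hev : IsEmpty C.val.toD.V :=
        ⟨fun v => Set.eq_empty_iff_forall_notMem.mp hC v.val v.prop⟩
      exact obj_empty_eq B C.val.toD (Subdigraph.finiteV C.prop) hev _ _
    · have hii : ((compSub Gf D.val i).verts).Nonempty := ⟨w0, ⟨w0, hw0, rfl⟩⟩
      have hyD := congrFun (hxf D) (⟨i, hii⟩ : SIdx Gf D.val)
      have hle2 : C.val.le (compSub Gf D.val i) := by
        constructor
        · intro v hv
          exact ⟨v, hv, rfl⟩
        · intro a b e
          refine ⟨?_, a, b, e, rfl, rfl⟩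
          intro hEq
          have hab : a = b := by
            exact eq_of_heq (Sigma.mk.inj_iff.mp hEq).2
          subst hab
          exact (Gf i).loopless a (C.val.edge_sub e)
      have hrm : restrictMap (sigmaIncl Gf i) C.val =
          DMap.comp (riMap Gf D.val i) (Subdigraph.inclDMap hle2) := DMap.ext rfl
      have e3 := hom_congr_apply
        (B.map_comp (Subdigraph.finiteV C.prop)
          (Subdigraph.finiteV (compSub_finite D.prop i))
          (Subdigraph.finiteV D.prop)
          (Subdigraph.inclDMap hle2) (riMap Gf D.val i)) (xf D)
      rw [hrm]
      refine e3.trans ?_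
      show B.map (Subdigraph.finiteV C.prop)
          (Subdigraph.finiteV (compSub_finite D.prop i)) (Subdigraph.inclDMap hle2)
          (B.map (Subdigraph.finiteV (compSub_finite D.prop i)) (Subdigraph.finiteV D.prop)
            (riMap Gf D.val i) (xf D)) = _
      rw [show B.map (Subdigraph.finiteV (compSub_finite D.prop i)) (Subdigraph.finiteV D.prop)
            (riMap Gf D.val i) (xf D) = (y i).val (compFin Gf D i) from hyD]
      exact (y i).prop C (compFin Gf D i) hle2
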